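/- Flat exit lemma: Let 0 < δ < 1/100, let B ⊂ H be a closed ball and L a horizontal line. Suppose p_1, ..., p_N ∈ H satisfy: p_1 is the center of B; d(p_1,p_N) > rad(B); d(p_i,p_{i+1}) < δ·diam(B) for each i; and sup over points z of the chain lying in B of d(z,L) ≤ diam(B)/100. Then there exist indices i, j with p_i, p_j ∈ B and |P_L(p_i) - P_L(p_j)| > diam(B)/4, where P_L is the projection onto L (composition of the perpendicular horizontal projection p ↦ p_L followed by vertical translation into L, viewed as a point of R ≅ L). -/

import Mathlib

/-- The Heisenberg group as `ℝ × ℝ × ℝ`. -/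
abbrev H : Type := ℝ × ℝ × ℝ

/-- Heisenberg group multiplication. -/
def Hmul (a b : H) : H :=
  (a.1 + b.1, a.2.1 + b.2.1, a.2.2 + b.2.2 + 2 * (a.1 * b.2.1 - b.1 * a.2.1))

/-- Heisenberg group inverse. -/
def Hinv (a : H) : H := (-a.1, -a.2.1, -a.2.2)

/-- The Koranyi norm. -/
noncomputable def KN (a : H) : ℝ :=
  ((a.1 ^ 2 + a.2.1 ^ 2) ^ 2 + a.2.2 ^ 2) ^ ((1 : ℝ) / 4)

/-- The Koranyi distance. -/
noncomputable def Hd (a b : H) : ℝ := KN (Hmul (Hinv a) b)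

/-- Distance from a point to a set. -/
noncomputable def distSet (p : H) (L : Set H) : ℝ := sInf {r : ℝ | ∃ q ∈ L, r = Hd p q}

/-- The x-axis, a horizontal line. -/
def xAxis : Set H := {q : H | ∃ t : ℝ, q = (t, 0, 0)}

/-- A general horizontal line through `g` with horizontal direction `v`. -/
def horizLine (g : H) (v : ℝ × ℝ) : Set H :=
  {q : H | ∃ t : ℝ, q = Hmul g (t * v.1, t * v.2, 0)}

/-- The non-horizontality `NH(g) = N(g⁻¹ · π̃(g))`. -/
noncomputable def NH (g : H) : ℝ := KN (Hmul (Hinv g) (g.1, g.2.1, 0))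

/-- The real coordinate of the projection of p onto the horizontal line through g
with horizontal direction v, under the linear isometric identification of the
line with the reals. -/
noncomputable def PL (g : H) (v : ℝ × ℝ) (p : H) : ℝ :=
  ((p.1 - g.1) * v.1 + (p.2.1 - g.2.1) * v.2) / Real.sqrt (v.1 ^ 2 + v.2 ^ 2)

/-! The Korányi gauge is used only as a quasi-norm: a horizontal bound `s` and a vertical bound
`s²` add up along products (`KoranyiBox`), so `N(a₁ ⋯ aₙ) ≤ 2^{1/4} Σ N(aᵢ)`. Let `p_j` be the last
point of the chain before it first leaves `B`; as the steps are short, `d(x, p_j) ≳ 2^{-1/4} r`.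
Both `x` and `p_j` lie near `L`, where distances are controlled by those of the projections to `L`,
so `|P_L(x) - P_L(p_j)| ≳ 2^{-1/2} r > r / 2`. -/

lemma KN_nonneg (a : H) : 0 ≤ KN a := Real.rpow_nonneg (by positivity) _

lemma KN_pow_four (a : H) : KN a ^ 4 = (a.1 ^ 2 + a.2.1 ^ 2) ^ 2 + a.2.2 ^ 2 := by
  rw [KN, ← Real.rpow_natCast, ← Real.rpow_mul (by positivity)]
  norm_num

lemma KN_hinv (a : H) : KN (Hinv a) = KN a := by
  simp [KN, Hinv]

lemma KN_horizontal (u₁ u₂ : ℝ) : KN (u₁, u₂, 0) = √(u₁ ^ 2 + u₂ ^ 2) := by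
  rw [KN, Real.sqrt_eq_rpow, zero_pow two_ne_zero, add_zero, ← Real.rpow_natCast,
    ← Real.rpow_mul (by positivity)]
  norm_num

lemma Hd_nonneg (a b : H) : 0 ≤ Hd a b := KN_nonneg _

lemma Hd_self (a : H) : Hd a a = 0 := by
  simp [Hd, KN, Hmul, Hinv]

lemma Hd_comm (a b : H) : Hd a b = Hd b a := by
  have h : Hmul (Hinv a) b = Hinv (Hmul (Hinv b) a) := by
    ext <;> simp only [Hmul, Hinv] <;> ring
  rw [Hd, h, KN_hinv, Hd]

lemma Hmul_hinv_mul_hinv (a b c : H) :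
    Hmul (Hmul (Hinv a) b) (Hmul (Hinv b) c) = Hmul (Hinv a) c := by
  ext <;> simp only [Hmul, Hinv] <;> ring

lemma Hinv_Hmul_mul_Hmul (g a b : H) : Hmul (Hinv (Hmul g a)) (Hmul g b) = Hmul (Hinv a) b := by
  ext <;> simp only [Hmul, Hinv] <;> ring

lemma abs_mul_add_mul_le {u₁ u₂ w₁ w₂ s t : ℝ} (hu : u₁ ^ 2 + u₂ ^ 2 ≤ s ^ 2)
    (hw : w₁ ^ 2 + w₂ ^ 2 ≤ t ^ 2) (hs : 0 ≤ s) (ht : 0 ≤ t) : |u₁ * w₁ + u₂ * w₂| ≤ s * t := by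
  refine abs_le_of_sq_le_sq ?_ (by positivity)
  have lagrange : (u₁ * w₁ + u₂ * w₂) ^ 2 + (u₁ * w₂ - u₂ * w₁) ^ 2
      = (u₁ ^ 2 + u₂ ^ 2) * (w₁ ^ 2 + w₂ ^ 2) := by ring
  nlinarith [sq_nonneg (u₁ * w₂ - u₂ * w₁), mul_le_mul hu hw (by positivity) (sq_nonneg s)]

def KoranyiBox (s : ℝ) (a : H) : Prop :=
  a.1 ^ 2 + a.2.1 ^ 2 ≤ s ^ 2 ∧ |a.2.2| ≤ s ^ 2

lemma koranyiBox_KN (a : H) : KoranyiBox (KN a) a := by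
  have h4 := KN_pow_four a
  have h0 := KN_nonneg a
  refine ⟨?_, abs_le_of_sq_le_sq ?_ (by positivity)⟩
  · nlinarith [sq_nonneg a.2.2, sq_nonneg (KN a ^ 2 + (a.1 ^ 2 + a.2.1 ^ 2))]
  · nlinarith [sq_nonneg (a.1 ^ 2 + a.2.1 ^ 2)]

lemma KoranyiBox.Hmul {s t : ℝ} {a b : H} (ha : KoranyiBox s a) (hb : KoranyiBox t b)
    (hs : 0 ≤ s) (ht : 0 ≤ t) : KoranyiBox (s + t) (Hmul a b) := by
  have dot := abs_le.1 (abs_mul_add_mul_le ha.1 hb.1 hs ht)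
  have cross := abs_le.1 (abs_mul_add_mul_le (w₁ := b.2.1) (w₂ := -b.1) ha.1
    (by linarith [hb.1]) hs ht)
  obtain ⟨ha₃, ha₃'⟩ := abs_le.1 ha.2
  obtain ⟨hb₃, hb₃'⟩ := abs_le.1 hb.2
  refine ⟨?_, abs_le.2 ⟨?_, ?_⟩⟩ <;> simp only [_root_.Hmul] <;> nlinarith [ha.1, hb.1]

lemma KN_le_of_koranyiBox {s : ℝ} {a : H} (ha : KoranyiBox s a) (hs : 0 ≤ s) :
    KN a ≤ 2 ^ (1 / 4 : ℝ) * s := by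
  have h2 : ((2 : ℝ) ^ (1 / 4 : ℝ)) ^ 4 = 2 := by
    rw [← Real.rpow_natCast, ← Real.rpow_mul zero_le_two]
    norm_num
  refine le_of_pow_le_pow_left₀ four_ne_zero (by positivity) ?_
  have hv : a.2.2 ^ 2 ≤ (s ^ 2) ^ 2 := sq_le_sq' (abs_le.1 ha.2).1 (abs_le.1 ha.2).2
  have hh : (a.1 ^ 2 + a.2.1 ^ 2) ^ 2 ≤ (s ^ 2) ^ 2 := pow_le_pow_left₀ (by positivity) ha.1 2
  rw [KN_pow_four, mul_pow, h2]
  nlinarith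

lemma Hd_le_quasi (a b c : H) : Hd a c ≤ 2 ^ (1 / 4 : ℝ) * (Hd a b + Hd b c) := by
  rw [Hd, ← Hmul_hinv_mul_hinv a b c]
  exact KN_le_of_koranyiBox ((koranyiBox_KN _).Hmul (koranyiBox_KN _) (KN_nonneg _)
    (KN_nonneg _)) (add_nonneg (Hd_nonneg _ _) (Hd_nonneg _ _))

lemma Hd_le_quasi₃ (a b c d : H) :
    Hd a d ≤ 2 ^ (1 / 4 : ℝ) * (Hd a b + Hd b c + Hd c d) := by
  have habc := add_nonneg (Hd_nonneg a b) (Hd_nonneg b c)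
  rw [Hd, ← Hmul_hinv_mul_hinv a c d, ← Hmul_hinv_mul_hinv a b c]
  exact KN_le_of_koranyiBox (((koranyiBox_KN _).Hmul (koranyiBox_KN _) (KN_nonneg _)
    (KN_nonneg _)).Hmul (koranyiBox_KN _) habc (KN_nonneg _)) (add_nonneg habc (Hd_nonneg c d))

lemma two_rpow_quarter_le : (2 : ℝ) ^ (1 / 4 : ℝ) ≤ 6 / 5 := by
  refine le_of_pow_le_pow_left₀ four_ne_zero (by norm_num) ?_
  rw [← Real.rpow_natCast, ← Real.rpow_mul zero_le_two]
  norm_num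

lemma abs_PL_sub_le_Hd (g : H) (v : ℝ × ℝ) (a b : H) : |PL g v a - PL g v b| ≤ Hd a b := by
  have hv : v.1 ^ 2 + v.2 ^ 2 ≤ √(v.1 ^ 2 + v.2 ^ 2) ^ 2 := (Real.sq_sqrt (by positivity)).ge
  have hab := abs_mul_add_mul_le (koranyiBox_KN (Hmul (Hinv a) b)).1 hv (KN_nonneg _)
    (Real.sqrt_nonneg _)
  rw [PL, PL, ← sub_div, abs_div, abs_of_nonneg (Real.sqrt_nonneg _)]
  refine div_le_of_le_mul₀ (Real.sqrt_nonneg _) (Hd_nonneg a b) ((le_of_eq ?_).trans hab)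
  rw [← abs_neg]
  congr 1
  simp only [Hmul, Hinv]
  ring

lemma PL_Hmul_horizontal (g : H) (v : ℝ × ℝ) (t : ℝ) :
    PL g v (Hmul g (t * v.1, t * v.2, 0)) = t * √(v.1 ^ 2 + v.2 ^ 2) := by
  simp only [PL, Hmul]
  rw [show (g.1 + t * v.1 - g.1) * v.1 + (g.2.1 + t * v.2 - g.2.1) * v.2
      = t * (√(v.1 ^ 2 + v.2 ^ 2) * √(v.1 ^ 2 + v.2 ^ 2)) by
    rw [Real.mul_self_sqrt (by positivity)]; ring, mul_div_assoc, mul_self_div_self]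

lemma Hd_eq_abs_PL_sub_of_mem_horizLine {g : H} {v : ℝ × ℝ} {q q' : H}
    (hq : q ∈ horizLine g v) (hq' : q' ∈ horizLine g v) :
    Hd q q' = |PL g v q - PL g v q'| := by
  obtain ⟨s, rfl⟩ := hq
  obtain ⟨t, rfl⟩ := hq'
  rw [PL_Hmul_horizontal, PL_Hmul_horizontal, ← sub_mul, abs_mul,
    abs_of_nonneg (Real.sqrt_nonneg _), Hd, Hinv_Hmul_mul_Hmul, ← abs_sub_comm,
    ← Real.sqrt_sq_eq_abs, ← Real.sqrt_mul (sq_nonneg _)]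
  rw [show Hmul (Hinv (s * v.1, s * v.2, 0)) (t * v.1, t * v.2, 0)
      = ((t - s) * v.1, (t - s) * v.2, 0) by ext <;> simp only [Hmul, Hinv] <;> ring,
    KN_horizontal]
  congr 1
  ring

lemma Hd_le_of_mem_horizLine {g : H} {v : ℝ × ℝ} {q q' : H} (hq : q ∈ horizLine g v)
    (hq' : q' ∈ horizLine g v) (a b : H) :
    Hd a b ≤ 2 ^ (1 / 4 : ℝ) * (|PL g v a - PL g v b| + 2 * Hd a q + 2 * Hd b q') := by
  have hqq' : Hd q q' ≤ |PL g v a - PL g v b| + Hd a q + Hd b q' := by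
    rw [Hd_eq_abs_PL_sub_of_mem_horizLine hq hq']
    calc |PL g v q - PL g v q'|
        = |(PL g v a - PL g v b) + (PL g v q - PL g v a) + (PL g v b - PL g v q')| := by ring_nf
      _ ≤ |PL g v a - PL g v b| + |PL g v q - PL g v a| + |PL g v b - PL g v q'| :=
          abs_add_three _ _ _
      _ ≤ _ := by
          rw [abs_sub_comm (PL g v q)]
          gcongr <;> exact abs_PL_sub_le_Hd g v _ _
  calc Hd a b ≤ 2 ^ (1 / 4 : ℝ) * (Hd a q + Hd q q' + Hd q' b) := Hd_le_quasi₃ a q q' b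
    _ ≤ _ := by
        rw [Hd_comm q' b]
        exact mul_le_mul_of_nonneg_left (by linarith) (by positivity)

lemma exists_Hd_lt_distSet_add {L : Set H} (hL : L.Nonempty) (p : H) {ε : ℝ} (hε : 0 < ε) :
    ∃ q ∈ L, Hd p q < distSet p L + ε := by
  obtain ⟨q₀, hq₀⟩ := hL
  obtain ⟨_, ⟨q, hq, rfl⟩, h⟩ := Real.lt_sInf_add_pos
    (⟨Hd p q₀, q₀, hq₀, rfl⟩ : {r : ℝ | ∃ q ∈ L, r = Hd p q}.Nonempty) hε
  exact ⟨q, hq, h⟩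

lemma horizLine_nonempty (g : H) (v : ℝ × ℝ) : (horizLine g v).Nonempty :=
  ⟨_, 0, rfl⟩

lemma Nat.exists_le_lt_and_not_succ {P : ℕ → Prop} {m n : ℕ} (hmn : m ≤ n) (hm : P m)
    (hn : ¬ P n) : ∃ j, m ≤ j ∧ j < n ∧ P j ∧ ¬ P (j + 1) := by
  induction n, hmn using Nat.le_induction with
  | base => exact absurd hm hn
  | succ n hmn ih =>
    by_cases h : P n
    · exact ⟨n, hmn, n.lt_succ_self, h, hn⟩
    · obtain ⟨j, hmj, hjn, hj, hj'⟩ := ih h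
      exact ⟨j, hmj, hjn.trans n.lt_succ_self, hj, hj'⟩

theorem flat_exit_general (δ : ℝ) (hδ : δ < 1 / 100)
    (x : H) (r : ℝ) (hr : 0 < r) (g : H) (v : ℝ × ℝ)
    (N : ℕ) (hN : 1 ≤ N) (p : ℕ → H)
    (hstart : p 1 = x)
    (hexit : Hd x (p N) > r)
    (hchain : ∀ i, 1 ≤ i → i < N → Hd (p i) (p (i + 1)) < δ * (2 * r))
    (hclose : ∀ i, 1 ≤ i → i ≤ N → Hd x (p i) ≤ r →
      distSet (p i) (horizLine g v) ≤ (2 * r) / 100) :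
    ∃ i j, 1 ≤ i ∧ i ≤ N ∧ 1 ≤ j ∧ j ≤ N ∧ Hd x (p i) ≤ r ∧ Hd x (p j) ≤ r ∧
      |PL g v (p i) - PL g v (p j)| > (2 * r) / 4 := by
  have hx : Hd x (p 1) ≤ r := by rw [hstart, Hd_self]; exact hr.le
  obtain ⟨j, hj1, hjN, hjr, hjexit⟩ := Nat.exists_le_lt_and_not_succ
    (P := fun i ↦ Hd x (p i) ≤ r) hN hx (not_le.2 hexit)
  have hnear : ∀ i, 1 ≤ i → i ≤ N → Hd x (p i) ≤ r →
      ∃ q ∈ horizLine g v, Hd (p i) q < 3 * r / 100 := fun i hi1 hiN hir ↦ by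
    obtain ⟨q, hq, hpq⟩ := exists_Hd_lt_distSet_add (horizLine_nonempty g v) (p i)
      (ε := r / 100) (by positivity)
    exact ⟨q, hq, by linarith [hclose i hi1 hiN hir]⟩
  obtain ⟨q, hq, hxq⟩ := hnear 1 le_rfl hN hx
  obtain ⟨q', hq', hjq'⟩ := hnear j hj1 hjN.le hjr
  refine ⟨1, j, le_rfl, hN, hj1, hjN.le, hx, hjr, ?_⟩
  by_contra! hsmall
  have hα := two_rpow_quarter_le
  have hstep : Hd (p j) (p (j + 1)) < r / 50 := by nlinarith [hchain j hj1 hjN]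
  have hJ : Hd x (p j) ≤ 6 / 5 * (31 / 50 * r) := by
    rw [← hstart]
    refine (Hd_le_of_mem_horizLine hq hq' _ _).trans (mul_le_mul hα (by linarith) ?_ (by norm_num))
    linarith [abs_nonneg (PL g v (p 1) - PL g v (p j)), Hd_nonneg (p 1) q, Hd_nonneg (p j) q']
  have hfar : r < 2 ^ (1 / 4 : ℝ) * (Hd x (p j) + Hd (p j) (p (j + 1))) :=
    (not_le.1 hjexit).trans_le (Hd_le_quasi x (p j) (p (j + 1)))
  have := mul_le_mul_of_nonneg_right hα (add_nonneg (Hd_nonneg x (p j)) (Hd_nonneg (p j) (p (j + 1))))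
  linarith

/-- Flat exit lemma: a well-connected chain starting at the center of a ball B of
radius r, exiting B, and staying diam(B)/100-close to a horizontal line L inside
B, must have projection onto L of diameter more than diam(B)/4. -/
theorem flat_exit (δ : ℝ) (hδ0 : 0 < δ) (hδ : δ < 1 / 100)
    (x : H) (r : ℝ) (hr : 0 < r) (g : H) (v : ℝ × ℝ) (hv : v ≠ 0)
    (N : ℕ) (hN : 1 ≤ N) (p : ℕ → H)
    (hstart : p 1 = x)
    (hexit : Hd x (p N) > r)
    (hchain : ∀ i, 1 ≤ i → i < N → Hd (p i) (p (i + 1)) < δ * (2 * r))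
    (hclose : ∀ i, 1 ≤ i → i ≤ N → Hd x (p i) ≤ r →
      distSet (p i) (horizLine g v) ≤ (2 * r) / 100) :
    ∃ i j, 1 ≤ i ∧ i ≤ N ∧ 1 ≤ j ∧ j ≤ N ∧ Hd x (p i) ≤ r ∧ Hd x (p j) ≤ r ∧
      |PL g v (p i) - PL g v (p j)| > (2 * r) / 4 :=
  flat_exit_general δ hδ x r hr g v N hN p hstart hexit hchain hclose
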